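/- arXiv:2109.00613 — 7 statements merged into one kernel-verified Lean document; each statement's English description precedes it below -/
import Mathlib

section
/- Let n, w be natural numbers with w ≤ n and let D be a set of natural numbers. Let C and A be families of w-element subsets of Fin n such that the Johnson distance between any two distinct members of C lies in D. Let m be the maximum cardinality of a subfamily C' of A such that the Johnson distance between any two distinct members of C' lies in D. Then |C| · |A| ≤ m · C(n,w), where C(n,w) is the binomial coefficient. -/
/-!
Translate the code `C` by every permutation `g` of the coordinates. Permutations preserve the
Johnson distance, so `g • C ∩ A` is a `D`-code inside `A` and has at most `m` elements. On the
other hand, `Perm (Fin n)` acts transitively on the `w`-subsets, so for any two `w`-subsets `c`, `a`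
exactly `n! / C(n,w)` permutations map `c` to `a` (orbit–stabilizer). Summing `#(g • C ∩ A)` over
all `g` therefore gives `#C * #A * n! / C(n,w) ≤ n! * m`.
-/

open Finset MulAction Equiv
open scoped Nat Pointwise

section
variable {G β : Type*} [Group G] [MulAction G β] [DecidableEq β]

theorem card_smul_finset_inter (g : G) (C A : Finset β) :
    #(g • C ∩ A) = #{c ∈ C | g • c ∈ A} := by
  rw [← card_smul_finset g⁻¹, smul_finset_inter, inv_smul_smul]
  congr 1
  ext c
  simp [mem_inv_smul_finset_iff]

variable [Fintype G]

theorem card_filter_smul_eq_natCard_stabilizer {x y : β} (hy : y ∈ orbit G x) :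
    #{g : G | g • x = y} = Nat.card (stabilizer G x) := by
  obtain ⟨g₀, rfl⟩ := hy
  have hset : ({g : G | g • x = g₀ • x} : Set G) = g₀ • (stabilizer G x : Set G) := by
    ext g
    simp [Set.mem_smul_set_iff_inv_smul_mem, mul_smul, inv_smul_eq_iff]
  rw [← Set.ncard_coe_finset, coe_filter_univ, hset, Set.ncard_smul_set, ← Nat.card_coe_set_eq]
  rfl

theorem card_filter_smul_eq_mul_natCard_orbit {x y : β} (hy : y ∈ orbit G x) :
    #{g : G | g • x = y} * Nat.card (orbit G x) = Fintype.card G := by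
  rw [card_filter_smul_eq_natCard_stabilizer hy, mul_comm, ← Nat.card_prod,
    Nat.card_congr (orbitProdStabilizerEquivGroup G x), Nat.card_eq_fintype_card]

theorem sum_card_smul_finset_inter_mul {C A : Finset β} {k : ℕ}
    (hk : ∀ c ∈ C, Nat.card (orbit G c) = k) (hCA : ∀ c ∈ C, ∀ a ∈ A, a ∈ orbit G c) :
    (∑ g : G, #(g • C ∩ A)) * k = #C * #A * Fintype.card G := by
  have hcount : ∀ g : G, #(g • C ∩ A) = ∑ c ∈ C, ∑ a ∈ A, if g • c = a then 1 else 0 := by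
    intro g
    rw [card_smul_finset_inter, card_filter]
    simp only [sum_ite_eq]
  calc (∑ g : G, #(g • C ∩ A)) * k
      = ∑ c ∈ C, ∑ a ∈ A, #{g : G | g • c = a} * k := by
        simp only [hcount, card_filter, sum_mul]
        rw [sum_comm]
        exact sum_congr rfl fun c _ => sum_comm
    _ = ∑ c ∈ C, ∑ a ∈ A, Fintype.card G :=
        sum_congr rfl fun c hc => sum_congr rfl fun a ha => by
          rw [← hk c hc, card_filter_smul_eq_mul_natCard_orbit (hCA c hc a ha)]
    _ = #C * #A * Fintype.card G := by simp [mul_assoc]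

end

section
variable {α : Type*} [DecidableEq α]

theorem mem_orbit_perm_finset_iff {s t : Finset α} : t ∈ orbit (Perm α) s ↔ #t = #s := by
  constructor
  · rintro ⟨g, rfl⟩
    exact card_smul_finset g s
  · intro h
    have := Set.powersetCard.isPretransitive (α := α) (n := #s)
    obtain ⟨g, hg⟩ := exists_smul_eq (Perm α)
      (⟨s, rfl⟩ : Set.powersetCard α #s) ⟨t, h⟩
    exact ⟨g, congrArg Subtype.val hg⟩

theorem natCard_orbit_perm_finset [Fintype α] (s : Finset α) :
    Nat.card (orbit (Perm α) s) = (Fintype.card α).choose #s := by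
  have horbit : orbit (Perm α) s = ↑(powersetCard #s (univ : Finset α)) := by
    ext t
    simp [mem_orbit_perm_finset_iff]
  rw [horbit, Nat.card_coe_set_eq, Set.ncard_coe_finset, card_powersetCard, Finset.card_univ]

theorem pairwise_card_sdiff_mem_smul {G : Type*} [Group G] [MulAction G α] {D : Set ℕ}
    {C : Finset (Finset α)} (hC : (C : Set (Finset α)).Pairwise fun B₁ B₂ => #(B₁ \ B₂) ∈ D)
    (g : G) : ((g • C : Finset (Finset α)) : Set (Finset α)).Pairwise
      fun B₁ B₂ => #(B₁ \ B₂) ∈ D := by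
  rw [coe_smul_finset, ← Set.image_smul, (MulAction.injective g).injOn.pairwise_image]
  intro B₁ hB₁ B₂ hB₂ hne
  simpa only [Function.onFun, ← smul_finset_sdiff, card_smul_finset] using hC hB₁ hB₂ hne

end

theorem local_inequality_johnson_general (n w : ℕ) (D : Set ℕ)
    (C A : Finset (Finset (Fin n)))
    (hC : ∀ B ∈ C, B.card = w) (hA : ∀ B ∈ A, B.card = w)
    (hCD : ∀ B₁ ∈ C, ∀ B₂ ∈ C, B₁ ≠ B₂ → (B₁ \ B₂).card ∈ D)
    (m : ℕ)
    (hm : IsGreatest {k : ℕ | ∃ C' : Finset (Finset (Fin n)), C' ⊆ A ∧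
      (∀ B₁ ∈ C', ∀ B₂ ∈ C', B₁ ≠ B₂ → (B₁ \ B₂).card ∈ D) ∧ C'.card = k} m) :
    C.card * A.card ≤ m * Nat.choose n w := by
  have hcode (g : Perm (Fin n)) : #(g • C ∩ A) ≤ m :=
    hm.2 ⟨g • C ∩ A, inter_subset_right,
      (pairwise_card_sdiff_mem_smul hCD g).mono (by simp), rfl⟩
  have hcount := sum_card_smul_finset_inter_mul (G := Perm (Fin n)) (k := n.choose w)
    (fun c hc => by rw [natCard_orbit_perm_finset, hC c hc, Fintype.card_fin])
    (fun c hc a ha => mem_orbit_perm_finset_iff.2 ((hA a ha).trans (hC c hc).symm))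
  rw [Fintype.card_perm, Fintype.card_fin] at hcount
  have hsum : ∑ g : Perm (Fin n), #(g • C ∩ A) ≤ n ! * m := by
    simpa [Fintype.card_perm] using sum_le_card_nsmul univ _ m fun g _ => hcode g
  refine Nat.le_of_mul_le_mul_right ?_ (Nat.factorial_pos n)
  calc #C * #A * n ! = (∑ g : Perm (Fin n), #(g • C ∩ A)) * n.choose w := hcount.symm
    _ ≤ n ! * m * n.choose w := by gcongr
    _ = m * n.choose w * n ! := by ring

/-- Local inequality (code-anticode) bound in the Johnson scheme J(n,w):
words of length `n` and weight `w` are identified with `w`-element subsets of `Fin n`,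
and the Johnson distance between subsets `B₁` and `B₂` is `(B₁ \ B₂).card`. -/
theorem local_inequality_johnson (n w : ℕ) (hw : w ≤ n) (D : Set ℕ)
    (C A : Finset (Finset (Fin n)))
    (hC : ∀ B ∈ C, B.card = w) (hA : ∀ B ∈ A, B.card = w)
    (hCD : ∀ B₁ ∈ C, ∀ B₂ ∈ C, B₁ ≠ B₂ → (B₁ \ B₂).card ∈ D)
    (m : ℕ)
    (hm : IsGreatest {k : ℕ | ∃ C' : Finset (Finset (Fin n)), C' ⊆ A ∧
      (∀ B₁ ∈ C', ∀ B₂ ∈ C', B₁ ≠ B₂ → (B₁ \ B₂).card ∈ D) ∧ C'.card = k} m) :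
    C.card * A.card ≤ m * Nat.choose n w :=
  local_inequality_johnson_general n w D C A hC hA hCD m hm
end

section
/- Let n, w, D be natural numbers with w ≤ n. If C is a family of w-element subsets of Fin n such that any two distinct members have Johnson distance at least D+1, and A is a family of w-element subsets of Fin n such that any two members have Johnson distance at most D, then |C| · |A| ≤ C(n,w). -/
/-!
Double count the triples `(c, a, g)` with `c ∈ C`, `a ∈ A` and `g • a = c`, for a group `G`
acting transitively on `X`. By orbit–stabilizer each pair `(c, a)` is hit by exactly
`|G| / |X|` elements `g`, while each `g` hits at most one pair as soon as no translate `g • A`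
meets `C` twice; hence `|C| |A| |G| / |X| ≤ |G|`. For the Johnson scheme take `X` the
`w`-subsets of `Fin n` and `G` the permutations of `Fin n`: these preserve the Johnson distance,
so a translate of the anticode has diameter `≤ D` and cannot contain two codewords at
distance `≥ D + 1`.
-/

open Finset
open scoped Pointwise

namespace MulAction

variable {G X : Type*} [Group G] [Fintype G] [MulAction G X] [IsPretransitive G X] [DecidableEq X]

theorem card_filter_smul_eq_mul_card_eq_card_group (a b : X) :
    #{g : G | g • a = b} * Nat.card X = Nat.card G := by
  obtain ⟨g₀, rfl⟩ := exists_smul_eq G a b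
  have hfiber : #{g : G | g • a = g₀ • a} = Nat.card (stabilizer G a) := by
    rw [← Nat.card_eq_finsetCard]
    refine Nat.card_congr
      { toFun := fun g => ⟨g₀⁻¹ * g.1, ?_⟩
        invFun := fun h => ⟨g₀ * h.1, ?_⟩
        left_inv := fun g => by simp
        right_inv := fun h => by simp }
    · simp [mem_stabilizer_iff, mul_smul, (mem_filter.1 g.2).2]
    · simp [mul_smul, mem_stabilizer_iff.1 h.2]
  rw [hfiber, ← index_stabilizer_of_transitive G a, mul_comm, Subgroup.index_mul_card]

theorem card_mul_card_le_card_of_smul_mem_inj (C A : Finset X)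
    (h : ∀ g : G, ∀ a ∈ A, ∀ a' ∈ A, g • a ∈ C → g • a' ∈ C → a = a') :
    #C * #A ≤ Nat.card X := by
  set r : G → X × X → Prop := fun g p => g • p.2 = p.1
  have hle_one (g : G) : #((C ×ˢ A).bipartiteAbove r g) ≤ 1 := by
    refine card_le_one.2 fun p hp q hq => ?_
    simp only [bipartiteAbove, mem_filter, mem_product, r] at hp hq
    have hpq := h g p.2 hp.1.2 q.2 hq.1.2 (hp.2 ▸ hp.1.1) (hq.2 ▸ hq.1.1)
    exact Prod.ext (by rw [← hp.2, ← hq.2, hpq]) hpq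
  refine Nat.le_of_mul_le_mul_right ?_ (Nat.card_pos (α := G))
  calc #C * #A * Nat.card G
      = ∑ p ∈ C ×ˢ A, #(univ.bipartiteBelow r p) * Nat.card X := by
        simp only [bipartiteBelow, r, card_filter_smul_eq_mul_card_eq_card_group, sum_const,
          card_product, smul_eq_mul]
    _ = (∑ g : G, #((C ×ˢ A).bipartiteAbove r g)) * Nat.card X := by
        rw [← sum_mul, sum_card_bipartiteAbove_eq_sum_card_bipartiteBelow]
    _ ≤ Nat.card G * Nat.card X := by
        gcongr
        calc ∑ g : G, #((C ×ˢ A).bipartiteAbove r g)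
            ≤ ∑ _g : G, 1 := sum_le_sum fun g _ => hle_one g
          _ = Nat.card G := by simp
    _ = Nat.card X * Nat.card G := mul_comm _ _

end MulAction

theorem code_anticode_johnson_general (n w D : ℕ)
    (C A : Finset (Finset (Fin n)))
    (hC : ∀ B ∈ C, B.card = w) (hA : ∀ B ∈ A, B.card = w)
    (hCdist : ∀ B₁ ∈ C, ∀ B₂ ∈ C, B₁ ≠ B₂ → D + 1 ≤ (B₁ \ B₂).card)
    (hAdiam : ∀ B₁ ∈ A, ∀ B₂ ∈ A, (B₁ \ B₂).card ≤ D) :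
    C.card * A.card ≤ Nat.choose n w := by
  classical
  have := Set.powersetCard.isPretransitive (α := Fin n) (n := w)
  have hcard (F : Finset (Finset (Fin n))) (hF : ∀ B ∈ F, B.card = w) :
      #(F.subtype (· ∈ Set.powersetCard (Fin n) w)) = #F := by
    rw [card_subtype, filter_true_of_mem fun B hB => Set.powersetCard.mem_iff.2 (hF B hB)]
  have hX : Nat.card (Set.powersetCard (Fin n) w) = n.choose w := by
    rw [Set.powersetCard.card, Nat.card_fin]
  rw [← hcard C hC, ← hcard A hA, ← hX]
  refine MulAction.card_mul_card_le_card_of_smul_mem_inj (G := Equiv.Perm (Fin n)) _ _ ?_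
  intro g a ha a' ha' hga hga'
  simp only [mem_subtype] at ha ha' hga hga'
  by_contra hne
  have hdist := hCdist _ hga _ hga'
    (by simpa [Subtype.ext_iff] using (MulAction.injective g).ne hne)
  rw [Set.powersetCard.coe_smul, Set.powersetCard.coe_smul, ← smul_finset_sdiff,
    card_smul_finset] at hdist
  have hdiam := hAdiam _ ha _ ha'
  omega

/-- Code-anticode bound in the Johnson scheme J(n,w):
if every two distinct members of the code `C` have Johnson distance at least `D+1`
and every two members of the anticode `A` have Johnson distance at most `D`, then
`|C| * |A| ≤ C(n,w)`. -/
theorem code_anticode_johnson (n w D : ℕ) (hw : w ≤ n)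
    (C A : Finset (Finset (Fin n)))
    (hC : ∀ B ∈ C, B.card = w) (hA : ∀ B ∈ A, B.card = w)
    (hCdist : ∀ B₁ ∈ C, ∀ B₂ ∈ C, B₁ ≠ B₂ → D + 1 ≤ (B₁ \ B₂).card)
    (hAdiam : ∀ B₁ ∈ A, ∀ B₂ ∈ A, (B₁ \ B₂).card ≤ D) :
    C.card * A.card ≤ Nat.choose n w :=
  code_anticode_johnson_general n w D C A hC hA hCdist hAdiam
end

section
/- Suppose there exists a Steiner system 𝓑 = S(t,w,n) with 1 ≤ t ≤ w and 2w ≤ n. Then every family A of w-element subsets of Fin n in which any two members have Johnson distance at most w−t satisfies |A| ≤ C(n−t, w−t), and the blocks of 𝓑 attain the code-anticode bound: |𝓑| · C(n−t, w−t) = C(n,w). -/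
/-!
Let the symmetric group act on the `w`-subsets. Distinct blocks of a Steiner system meet in fewer
than `t` points, so no permutation can move two members of an anticode of diameter `w - t` into
blocks; double counting pairs (permutation, member mapped onto a block) gives the code-anticode
bound `|𝓑| * |A| ≤ C(n, w)`. Counting `t`-subsets gives `|𝓑| * C(w, t) = C(n, t)`, hence
`|𝓑| * C(n - t, w - t) = C(n, w)`, and dividing the bound by `|𝓑|` bounds `|A|`.
-/

open Finset MulAction
open scoped Pointwise

namespace MulAction

variable {G X : Type*} [Group G] [Fintype G] [MulAction G X] [IsPretransitive G X]

theorem card_filter_smul_eq_mul_natCard [DecidableEq X] (a c : X) :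
    #{g : G | g • a = c} * Nat.card X = Fintype.card G := by
  obtain ⟨g₀, rfl⟩ := exists_smul_eq G a c
  have hcoset : #{g : G | g • a = g₀ • a} = #{g : G | g ∈ stabilizer G a} :=
    card_nbij' (g₀⁻¹ * ·) (g₀ * ·) (by intro g; simp [mul_smul, inv_smul_eq_iff])
      (by intro g; simp [mul_smul]) (fun g _ => by simp) (fun g _ => by simp)
  rw [hcoset, ← Fintype.card_subtype, ← Nat.card_eq_fintype_card,
    ← index_stabilizer_of_transitive G a, Subgroup.card_mul_index, Nat.card_eq_fintype_card]

theorem card_filter_smul_mem_mul_natCard [DecidableEq X] (a : X) (C : Finset X) :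
    #{g : G | g • a ∈ C} * Nat.card X = #C * Fintype.card G := by
  rw [card_eq_sum_card_fiberwise (s := {g : G | g • a ∈ C}) (f := (· • a)) (t := C)
      fun g hg => (mem_filter.1 hg).2,
    sum_mul, ← smul_eq_mul, ← sum_const]
  refine sum_congr rfl fun c hc => ?_
  rw [filter_filter, ← card_filter_smul_eq_mul_natCard a c]
  congr 2
  exact filter_congr fun g _ => ⟨And.right, fun hg => ⟨hg ▸ hc, hg⟩⟩

theorem card_mul_card_le_of_isPretransitive (C A : Finset X)
    (h : ∀ g : G, ∀ a ∈ A, ∀ b ∈ A, g • a ∈ C → g • b ∈ C → a = b) :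
    #C * #A ≤ Nat.card X := by
  classical
  have hdouble : ∑ a ∈ A, #{g : G | g • a ∈ C} ≤ Fintype.card G := by
    calc ∑ a ∈ A, #{g : G | g • a ∈ C} = ∑ g : G, #{a ∈ A | g • a ∈ C} :=
          sum_card_bipartiteAbove_eq_sum_card_bipartiteBelow (fun a (g : G) => g • a ∈ C)
      _ ≤ ∑ _g : G, 1 := sum_le_sum fun g _ => card_le_one.2 fun a ha b hb =>
          h g a (mem_filter.1 ha).1 b (mem_filter.1 hb).1 (mem_filter.1 ha).2 (mem_filter.1 hb).2
      _ = Fintype.card G := by simp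
  have hG : 0 < Fintype.card G := Fintype.card_pos
  refine le_of_mul_le_mul_right ?_ hG
  calc #C * #A * Fintype.card G = (∑ a ∈ A, #{g : G | g • a ∈ C}) * Nat.card X := by
        rw [sum_mul, sum_congr rfl fun a _ => card_filter_smul_mem_mul_natCard a C, sum_const,
          smul_eq_mul]
        ring
    _ ≤ Fintype.card G * Nat.card X := Nat.mul_le_mul_right _ hdouble
    _ = Nat.card X * Fintype.card G := mul_comm _ _

end MulAction

theorem card_mul_card_le_choose_of_sdiff {α : Type*} [Fintype α] [DecidableEq α] {w d : ℕ}
    {C A : Finset (Finset α)} (hC : ∀ B ∈ C, #B = w) (hA : ∀ S ∈ A, #S = w)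
    (hCdist : ∀ B₁ ∈ C, ∀ B₂ ∈ C, B₁ ≠ B₂ → d < #(B₁ \ B₂))
    (hAdiam : ∀ S₁ ∈ A, ∀ S₂ ∈ A, #(S₁ \ S₂) ≤ d) :
    #C * #A ≤ (Fintype.card α).choose w := by
  classical
  have := Set.powersetCard.isPretransitive (α := α) (n := w)
  have hlift (F : Finset (Finset α)) (hF : ∀ S ∈ F, #S = w) :
      #(F.subtype (· ∈ Set.powersetCard α w)) = #F := by
    rw [card_subtype, filter_true_of_mem fun S hS => Set.powersetCard.mem_iff.2 (hF S hS)]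
  rw [← hlift C hC, ← hlift A hA, ← Nat.card_eq_fintype_card, ← Set.powersetCard.card]
  refine card_mul_card_le_of_isPretransitive (G := Equiv.Perm α) _ _
    fun σ S hS S' hS' hσS hσS' => ?_
  by_contra hne
  have hisometry : #(σ • (S : Finset α) \ σ • (S' : Finset α)) = #((S : Finset α) \ S') := by
    rw [← smul_finset_sdiff, card_smul_finset]
  have hfar := hCdist _ (mem_subtype.1 hσS) _ (mem_subtype.1 hσS')
    (by simpa [Subtype.ext_iff] using hne)
  simp only [Set.powersetCard.coe_smul] at hfar
  have hclose := hAdiam _ (mem_subtype.1 hS) _ (mem_subtype.1 hS')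
  omega

structure IsSteinerSystem {α : Type*} (t w : ℕ) (𝓑 : Finset (Finset α)) : Prop where
  card_eq : ∀ B ∈ 𝓑, #B = w
  existsUnique : ∀ T : Finset α, #T = t → ∃! B, B ∈ 𝓑 ∧ T ⊆ B

namespace IsSteinerSystem

variable {α : Type*} [DecidableEq α] {t w : ℕ} {𝓑 : Finset (Finset α)}

theorem card_mul_choose [Fintype α] (hS : IsSteinerSystem t w 𝓑) :
    #𝓑 * w.choose t = (Fintype.card α).choose t := by
  have h := card_mul_eq_card_mul (fun B T => T ⊆ B) (s := 𝓑) (t := univ.powersetCard t)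
    (m := w.choose t) (n := 1)
    (fun B hB => by
      rw [← hS.card_eq B hB, ← card_powersetCard]
      congr 1
      ext T
      simp [bipartiteAbove, and_comm])
    (fun T hT => by
      obtain ⟨B, hB, huniq⟩ := hS.existsUnique T (mem_powersetCard.1 hT).2
      exact card_eq_one.2 ⟨B, eq_singleton_iff_unique_mem.2
        ⟨mem_filter.2 hB, fun B' hB' => huniq B' (mem_filter.1 hB')⟩⟩)
  rwa [card_powersetCard, card_univ, mul_one] at h

theorem card_inter_lt (hS : IsSteinerSystem t w 𝓑) {B₁ B₂ : Finset α} (h₁ : B₁ ∈ 𝓑)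
    (h₂ : B₂ ∈ 𝓑) (hne : B₁ ≠ B₂) : #(B₁ ∩ B₂) < t := by
  by_contra! hle
  obtain ⟨T, hT, hTcard⟩ := exists_subset_card_eq hle
  obtain ⟨B, -, huniq⟩ := hS.existsUnique T hTcard
  exact hne <| (huniq B₁ ⟨h₁, hT.trans inter_subset_left⟩).trans
    (huniq B₂ ⟨h₂, hT.trans inter_subset_right⟩).symm

theorem sub_lt_card_sdiff (hS : IsSteinerSystem t w 𝓑) (htw : t ≤ w) {B₁ B₂ : Finset α}
    (h₁ : B₁ ∈ 𝓑) (h₂ : B₂ ∈ 𝓑) (hne : B₁ ≠ B₂) : w - t < #(B₁ \ B₂) := by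
  have := card_sdiff_add_card_inter B₁ B₂
  have := hS.card_inter_lt h₁ h₂ hne
  have := hS.card_eq B₁ h₁
  omega

end IsSteinerSystem

theorem steiner_diameter_perfect_general (n w t : ℕ) (htw : t ≤ w)
    (hw : 2 * w ≤ n) (𝓑 : Finset (Finset (Fin n)))
    (hblocks : ∀ B ∈ 𝓑, B.card = w)
    (hsteiner : ∀ T : Finset (Fin n), T.card = t → ∃! B, B ∈ 𝓑 ∧ T ⊆ B) :
    (∀ A : Finset (Finset (Fin n)), (∀ S ∈ A, S.card = w) →
      (∀ S₁ ∈ A, ∀ S₂ ∈ A, (S₁ \ S₂).card ≤ w - t) →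
      A.card ≤ Nat.choose (n - t) (w - t)) ∧
    𝓑.card * Nat.choose (n - t) (w - t) = Nat.choose n w := by
  have hS : IsSteinerSystem t w 𝓑 := ⟨hblocks, hsteiner⟩
  have hcount : #𝓑 * w.choose t = n.choose t := by simpa using hS.card_mul_choose
  have hperfect : #𝓑 * (n - t).choose (w - t) = n.choose w := by
    refine Nat.eq_of_mul_eq_mul_right (Nat.choose_pos htw) ?_
    rw [mul_right_comm, hcount, Nat.choose_mul htw]
  refine ⟨fun A hA hdiam => ?_, hperfect⟩
  have h𝓑 : 0 < #𝓑 :=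
    Nat.pos_of_mul_pos_right (hcount ▸ Nat.choose_pos (by omega : t ≤ n))
  refine Nat.le_of_mul_le_mul_left ?_ h𝓑
  rw [hperfect]
  simpa using card_mul_card_le_choose_of_sdiff hblocks hA
    (fun B₁ h₁ B₂ h₂ hne => hS.sub_lt_card_sdiff htw h₁ h₂ hne) hdiam

/-- A Steiner system S(t,w,n) is a diameter perfect code: every anticode of
`w`-subsets with pairwise Johnson distance at most `w - t` has size at most
`C(n-t, w-t)`, and the blocks attain the code-anticode bound
`|𝓑| * C(n-t, w-t) = C(n,w)`. -/
theorem steiner_diameter_perfect (n w t : ℕ) (ht : 1 ≤ t) (htw : t ≤ w)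
    (hw : 2 * w ≤ n) (𝓑 : Finset (Finset (Fin n)))
    (hblocks : ∀ B ∈ 𝓑, B.card = w)
    (hsteiner : ∀ T : Finset (Fin n), T.card = t → ∃! B, B ∈ 𝓑 ∧ T ⊆ B) :
    (∀ A : Finset (Finset (Fin n)), (∀ S ∈ A, S.card = w) →
      (∀ S₁ ∈ A, ∀ S₂ ∈ A, (S₁ \ S₂).card ≤ w - t) →
      A.card ≤ Nat.choose (n - t) (w - t)) ∧
    𝓑.card * Nat.choose (n - t) (w - t) = Nat.choose n w :=
  steiner_diameter_perfect_general n w t htw hw 𝓑 hblocks hsteiner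
end

section
/- Let q ≥ 3, let n, w be natural numbers with w ≤ n, and let D be a set of natural numbers. Let C and A be sets of words of length n and weight w over Fin q such that the Hamming distance between any two distinct members of C lies in D. Let m be the maximum cardinality of a subset C' of A such that the Hamming distance between any two distinct members of C' lies in D. Then |C| · |A| ≤ m · C(n,w) · (q−1)^w. -/
/-!
The Hamming isometries of `Fin n → Fin q` fixing `0` (coordinate permutations followed by
coordinatewise symbol permutations fixing `0`) form a finite group `G` that preserves distances and
acts transitively on `J_q(n,w)`. Hence every `c ∈ C` is sent to every `a ∈ A` by exactly
`|G| / |J_q(n,w)|` elements of `G`, so `∑_g |gC ∩ A| = |G| |C| |A| / |J_q(n,w)|`. On the other hand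
each `g C ∩ A` is a subset of `A` with all distances in `D`, so it has at most `m` elements.
-/

/-- The weight of a word `x : Fin n → Fin q`: the number of nonzero coordinates. -/
def wt {n q : ℕ} (x : Fin n → Fin q) : ℕ :=
  (Finset.univ.filter fun i => (x i : ℕ) ≠ 0).card

open Finset MulAction
open scoped Pointwise

section CodeAnticode

variable {G α : Type*} [Group G] [Fintype G] [MulAction G α] [DecidableEq α]

theorem card_filter_smul_eq_congr {x y x' y' : α} {g₁ g₂ : G} (h₁ : g₁ • x' = x)
    (h₂ : g₂ • y = y') : #{g : G | g • x = y} = #{g : G | g • x' = y'} := by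
  refine card_nbij' (fun g ↦ g₂ * g * g₁) (fun g ↦ g₂⁻¹ * g * g₁⁻¹) ?_ ?_ ?_ ?_
  · intro g hg
    simp only [coe_filter, mem_univ, true_and, Set.mem_ofPred_eq] at hg ⊢
    rw [mul_smul, mul_smul, h₁, hg, h₂]
  · intro g hg
    simp only [coe_filter, mem_univ, true_and, Set.mem_ofPred_eq] at hg ⊢
    rw [mul_smul, mul_smul, ← h₁, inv_smul_smul, hg, ← h₂, inv_smul_smul]
  · intro g _
    simp [mul_assoc]
  · intro g _
    simp [mul_assoc]

theorem card_mul_card_le_of_pairwise {R : α → α → Prop}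
    (hR : ∀ (g : G) x y, R x y → R (g • x) (g • y)) {X C A : Finset α}
    (hX : ∀ g : G, ∀ x ∈ X, g • x ∈ X) (hXtrans : ∀ x ∈ X, ∀ y ∈ X, ∃ g : G, g • x = y)
    (hCX : C ⊆ X) (hAX : A ⊆ X) (hC : (C : Set α).Pairwise R) {m : ℕ}
    (hm : ∀ S ⊆ A, (S : Set α).Pairwise R → #S ≤ m) : #C * #A ≤ m * #X := by
  obtain rfl | ⟨c₀, hc₀⟩ := C.eq_empty_or_nonempty
  · simp
  set N := #{g : G | g • c₀ = c₀}
  have hN : 0 < N := card_pos.2 ⟨1, by simp⟩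
  have hfiber : ∀ x ∈ X, ∀ y ∈ X, #{g : G | g • x = y} = N := by
    intro x hx y hy
    obtain ⟨g₁, h₁⟩ := hXtrans c₀ (hCX hc₀) x hx
    obtain ⟨g₂, h₂⟩ := hXtrans y hy c₀ (hCX hc₀)
    exact card_filter_smul_eq_congr h₁ h₂
  have hG : Fintype.card G = #X * N := by
    rw [← card_univ, card_eq_sum_card_fiberwise (fun g _ ↦ hX g c₀ (hCX hc₀)),
      sum_congr rfl (hfiber c₀ (hCX hc₀)), sum_const, smul_eq_mul]
  have hcount : ∑ g : G, #{c ∈ C | g • c ∈ A} = #C * #A * N := by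
    calc ∑ g : G, #{c ∈ C | g • c ∈ A}
        = ∑ g : G, ∑ c ∈ C, ∑ a ∈ A, if g • c = a then 1 else 0 := by
          simp only [card_filter, sum_ite_eq]
      _ = ∑ c ∈ C, ∑ a ∈ A, #{g : G | g • c = a} := by
          rw [sum_comm]
          refine sum_congr rfl fun c _ ↦ ?_
          rw [sum_comm]
          simp only [card_filter]
      _ = #C * #A * N := by
          rw [sum_congr rfl fun c hc ↦ sum_congr rfl fun a ha ↦ hfiber c (hCX hc) a (hAX ha)]
          simp [mul_assoc]
  have hbound : ∀ g : G, #{c ∈ C | g • c ∈ A} ≤ m := by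
    intro g
    have hinj : Set.InjOn (g • · : α → α) ↑{c ∈ C | g • c ∈ A} :=
      (MulAction.injective g).injOn
    rw [← card_image_of_injOn hinj]
    refine hm _ (fun a ha ↦ ?_) ?_
    · obtain ⟨c, hc, rfl⟩ := mem_image.1 ha
      exact (mem_filter.1 hc).2
    · rw [coe_image, hinj.pairwise_image]
      exact (hC.mono (coe_subset.2 (filter_subset _ _))).imp (hR g)
  refine Nat.le_of_mul_le_mul_right ?_ hN
  calc #C * #A * N = ∑ g : G, #{c ∈ C | g • c ∈ A} := hcount.symm
    _ ≤ ∑ _g : G, m := sum_le_sum fun g _ ↦ hbound g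
    _ = m * #X * N := by rw [sum_const, card_univ, hG, smul_eq_mul]; ring

end CodeAnticode

theorem Finset.exists_perm_smul_eq_of_card_eq {ι : Type*} [DecidableEq ι] {s t : Finset ι}
    (h : #s = #t) : ∃ π : Equiv.Perm ι, π • s = t := by
  obtain ⟨π, hπ⟩ := (Set.powersetCard.isPretransitive (α := ι)).exists_smul_eq
    (⟨s, rfl⟩ : Set.powersetCard ι #s) ⟨t, h.symm⟩
  exact ⟨π, by simpa using congrArg Subtype.val hπ⟩

section Hamming

variable {ι β : Type*} [Fintype ι] [DecidableEq β]

variable (ι β) in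
def hammingIsometries : Subgroup (Equiv.Perm (ι → β)) where
  carrier := {σ | ∀ x y, hammingDist (σ x) (σ y) = hammingDist x y}
  mul_mem' hσ hτ x y := (hσ _ _).trans (hτ x y)
  one_mem' _ _ := rfl
  inv_mem' {σ} hσ x y := by
    rw [← hσ]
    simp

theorem arrowCongr_mem_hammingIsometries (π : Equiv.Perm ι) :
    Equiv.arrowCongr π (Equiv.refl β) ∈ hammingIsometries ι β := fun _ _ ↦
  card_equiv π.symm fun i ↦ by simp

theorem piCongrRight_mem_hammingIsometries (τ : ι → Equiv.Perm β) :
    Equiv.piCongrRight τ ∈ hammingIsometries ι β := fun _ _ ↦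
  hammingDist_comp _ fun i ↦ (τ i).injective

variable [Zero β]

variable (ι β) in
def hammingIsometriesFixingZero : Subgroup (Equiv.Perm (ι → β)) :=
  hammingIsometries ι β ⊓ stabilizer _ (0 : ι → β)

theorem hammingNorm_apply_of_mem_hammingIsometriesFixingZero {σ : Equiv.Perm (ι → β)}
    (hσ : σ ∈ hammingIsometriesFixingZero ι β) (x : ι → β) :
    hammingNorm (σ x) = hammingNorm x := by
  obtain ⟨hdist, hzero⟩ := Subgroup.mem_inf.1 hσ
  have hzero : σ 0 = 0 := mem_stabilizer_iff.1 hzero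
  rw [← hammingDist_zero_right, ← hammingDist_zero_right, ← hdist x 0, hzero]

theorem exists_mem_hammingIsometriesFixingZero_apply_eq_of_eq_zero_iff {x y : ι → β}
    (h : ∀ i, x i = 0 ↔ y i = 0) : ∃ σ ∈ hammingIsometriesFixingZero ι β, σ x = y := by
  refine ⟨Equiv.piCongrRight fun i ↦ Equiv.swap (x i) (y i),
    ⟨piCongrRight_mem_hammingIsometries _, ?_⟩, funext fun i ↦ Equiv.swap_apply_left _ _⟩
  refine mem_stabilizer_iff.2 (funext fun i ↦ ?_)
  change Equiv.swap (x i) (y i) 0 = 0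
  by_cases hx : x i = 0
  · rw [hx, (h i).1 hx, Equiv.swap_self, Equiv.refl_apply]
  · exact Equiv.swap_apply_of_ne_of_ne (Ne.symm hx) (Ne.symm (mt (h i).2 hx))

theorem exists_mem_hammingIsometriesFixingZero_apply_eq [DecidableEq ι] {x y : ι → β}
    (h : hammingNorm x = hammingNorm y) : ∃ σ ∈ hammingIsometriesFixingZero ι β, σ x = y := by
  obtain ⟨π, hπ⟩ := exists_perm_smul_eq_of_card_eq h
  set σ₁ := Equiv.arrowCongr π (Equiv.refl β)
  have hσ₁ : σ₁ ∈ hammingIsometriesFixingZero ι β :=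
    ⟨arrowCongr_mem_hammingIsometries π, mem_stabilizer_iff.2 rfl⟩
  obtain ⟨σ₂, hσ₂, hσ₂x⟩ := exists_mem_hammingIsometriesFixingZero_apply_eq_of_eq_zero_iff
    (x := σ₁ x) (y := y) fun i ↦ by
      have hi := Finset.ext_iff.1 hπ i
      rw [← inv_smul_mem_iff] at hi
      simpa [σ₁, not_iff_not] using hi
  exact ⟨σ₂ * σ₁, mul_mem hσ₂ hσ₁, hσ₂x⟩

section Card

variable [Fintype β] [DecidableEq ι]

theorem card_filter_support_eq (s : Finset ι) :
    #{x : ι → β | ({i | x i ≠ 0} : Finset ι) = s} = (Fintype.card β - 1) ^ #s := by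
  have hpi : ({x : ι → β | ({i | x i ≠ 0} : Finset ι) = s} : Finset _) =
      Fintype.piFinset fun i ↦ if i ∈ s then {0}ᶜ else {0} := by
    ext x
    simp only [mem_filter, mem_univ, true_and, Fintype.mem_piFinset, Finset.ext_iff]
    refine forall_congr' fun i ↦ ?_
    split_ifs with hi <;> simp [hi]
  rw [hpi, Fintype.card_piFinset]
  simp only [apply_ite card, card_compl, card_singleton]
  rw [prod_ite_mem, univ_inter, prod_const]

theorem card_filter_hammingNorm_eq (w : ℕ) :
    #{x : ι → β | hammingNorm x = w} = (Fintype.card ι).choose w * (Fintype.card β - 1) ^ w := by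
  have hsupp : ∀ x ∈ ({x : ι → β | hammingNorm x = w} : Finset _),
      ({i | x i ≠ 0} : Finset ι) ∈ powersetCard w univ :=
    fun x hx ↦ mem_powersetCard.2 ⟨subset_univ _, (mem_filter.1 hx).2⟩
  have hfiber : ∀ s ∈ powersetCard w (univ : Finset ι),
      #{x ∈ ({x : ι → β | hammingNorm x = w} : Finset _) | ({i | x i ≠ 0} : Finset ι) = s} =
        (Fintype.card β - 1) ^ w := by
    intro s hs
    rw [mem_powersetCard] at hs
    rw [filter_filter, ← hs.2, ← card_filter_support_eq]
    congr 1
    exact filter_congr fun x _ ↦ ⟨And.right, fun h ↦ ⟨h ▸ rfl, h⟩⟩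
  rw [card_eq_sum_card_fiberwise hsupp, sum_congr rfl hfiber, sum_const, card_powersetCard,
    card_univ, smul_eq_mul]

end Card

end Hamming

theorem wt_eq_hammingNorm {n q : ℕ} [NeZero q] (x : Fin n → Fin q) : wt x = hammingNorm x := by
  simp only [wt, hammingNorm, ne_eq, Fin.val_eq_zero_iff]

theorem local_inequality_Jq_general (q n w : ℕ) (hq : 3 ≤ q) (D : Set ℕ)
    (C A : Finset (Fin n → Fin q))
    (hC : ∀ c ∈ C, wt c = w) (hA : ∀ a ∈ A, wt a = w)
    (hCD : ∀ c₁ ∈ C, ∀ c₂ ∈ C, c₁ ≠ c₂ → hammingDist c₁ c₂ ∈ D)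
    (m : ℕ)
    (hm : IsGreatest {k : ℕ | ∃ C' : Finset (Fin n → Fin q), C' ⊆ A ∧
      (∀ c₁ ∈ C', ∀ c₂ ∈ C', c₁ ≠ c₂ → hammingDist c₁ c₂ ∈ D) ∧ C'.card = k} m) :
    C.card * A.card ≤ m * (Nat.choose n w * (q - 1) ^ w) := by
  classical
  have : NeZero q := ⟨by omega⟩
  set G := hammingIsometriesFixingZero (Fin n) (Fin q)
  set J : Finset (Fin n → Fin q) := {x | hammingNorm x = w}
  have hJ : ∀ x, x ∈ J ↔ wt x = w := by simp [J, wt_eq_hammingNorm]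
  have hJinv : ∀ g : G, ∀ x ∈ J, g • x ∈ J := fun g x hx ↦ by
    simpa [J, Subgroup.smul_def, hammingNorm_apply_of_mem_hammingIsometriesFixingZero g.2] using hx
  have hJtrans : ∀ x ∈ J, ∀ y ∈ J, ∃ g : G, g • x = y := fun x hx y hy ↦ by
    obtain ⟨σ, hσ, rfl⟩ := exists_mem_hammingIsometriesFixingZero_apply_eq
      ((mem_filter.1 hx).2.trans (mem_filter.1 hy).2.symm)
    exact ⟨⟨σ, hσ⟩, rfl⟩
  have hdist : ∀ (g : G) (x y : Fin n → Fin q),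
      hammingDist x y ∈ D → hammingDist (g • x) (g • y) ∈ D := fun g x y ↦ by
    rw [Subgroup.smul_def, Subgroup.smul_def, Equiv.Perm.smul_def, Equiv.Perm.smul_def, g.2.1]
    exact id
  have key := card_mul_card_le_of_pairwise hdist hJinv hJtrans (fun c hc ↦ (hJ c).2 (hC c hc))
    (fun a ha ↦ (hJ a).2 (hA a ha)) hCD (fun S hS hSD ↦ hm.2 ⟨S, hS, hSD, rfl⟩)
  rwa [card_filter_hammingNorm_eq, Fintype.card_fin, Fintype.card_fin] at key

/-- Local inequality (code-anticode) bound for J_q(n,w), the set of words of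
length `n` and weight `w` over an alphabet with `q > 2` symbols, with the
Hamming distance. -/
theorem local_inequality_Jq (q n w : ℕ) (hq : 3 ≤ q) (hw : w ≤ n) (D : Set ℕ)
    (C A : Finset (Fin n → Fin q))
    (hC : ∀ c ∈ C, wt c = w) (hA : ∀ a ∈ A, wt a = w)
    (hCD : ∀ c₁ ∈ C, ∀ c₂ ∈ C, c₁ ≠ c₂ → hammingDist c₁ c₂ ∈ D)
    (m : ℕ)
    (hm : IsGreatest {k : ℕ | ∃ C' : Finset (Fin n → Fin q), C' ⊆ A ∧
      (∀ c₁ ∈ C', ∀ c₂ ∈ C', c₁ ≠ c₂ → hammingDist c₁ c₂ ∈ D) ∧ C'.card = k} m) :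
    C.card * A.card ≤ m * (Nat.choose n w * (q - 1) ^ w) :=
  local_inequality_Jq_general q n w hq D C A hC hA hCD m hm
end

section
/- If there exists a generalized Steiner system GS(t,w,n,q) with q ≥ 3 and 2 ≤ t ≤ w ≤ n, then there exists a generalized Steiner system GS(t−1, w−1, n−1, q). -/
/-- `C` is a generalized Steiner system GS(t,w,n,q): a constant-weight code of
length `n` and weight `w` over `Fin q` with minimum Hamming distance
`2(w-t)+1`, such that every word of length `n` and weight `t` is at Hamming
distance exactly `w - t` from exactly one codeword. -/
def IsGS (t w n q : ℕ) (C : Finset (Fin n → Fin q)) : Prop :=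
  (∀ c ∈ C, wt c = w) ∧
  (∀ c₁ ∈ C, ∀ c₂ ∈ C, c₁ ≠ c₂ → 2 * (w - t) + 1 ≤ hammingDist c₁ c₂) ∧
  (∀ x : Fin n → Fin q, wt x = t → ∃! c, c ∈ C ∧ hammingDist x c = w - t)

/-! Fix a nonzero symbol `a` and keep the codewords ending in `a`, with that last coordinate
removed. A word of weight `t` within distance `w - t` of a codeword of weight `w` must agree
with it on its whole support, so for a word `x` of weight `t - 1` the unique codeword covering
`Fin.snoc x a` also ends in `a`. Appending or deleting a common last symbol changes weights by
one and leaves distances unchanged. -/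

open Finset

section Words

variable {n q : ℕ}

lemma wt_le (x : Fin n → Fin q) : wt x ≤ n :=
  (card_filter_le _ _).trans_eq (card_fin n)

lemma wt_snoc (x : Fin n → Fin q) (a : Fin q) :
    wt (Fin.snoc x a : Fin (n + 1) → Fin q) = wt x + if (a : ℕ) = 0 then 0 else 1 := by
  simp only [wt, card_filter, Fin.sum_univ_castSucc, Fin.snoc_castSucc, Fin.snoc_last]
  split_ifs <;> simp_all

lemma hammingDist_snoc_snoc (x y : Fin n → Fin q) (a : Fin q) :
    hammingDist (Fin.snoc x a : Fin (n + 1) → Fin q) (Fin.snoc y a) = hammingDist x y := by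
  simp only [hammingDist, card_filter, Fin.sum_univ_castSucc, Fin.snoc_castSucc, Fin.snoc_last]
  simp

lemma eq_on_support_of_hammingDist_le (x c : Fin n → Fin q)
    (hd : hammingDist x c ≤ wt c - wt x) (i : Fin n) (hi : (x i : ℕ) ≠ 0) : c i = x i := by
  classical
  set S := univ.filter fun i => (x i : ℕ) ≠ 0
  set T := univ.filter fun i => (c i : ℕ) ≠ 0
  set D := univ.filter fun i => x i ≠ c i
  have hsdiff : T \ S ⊆ D := fun j hj => by
    simp only [S, T, D, mem_sdiff, mem_filter, mem_univ, true_and, not_not] at hj ⊢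
    exact fun h => hj.1 (h ▸ hj.2)
  have hdisj : Disjoint (T \ S) (S ∩ D) :=
    disjoint_left.2 fun j hj hj' => (mem_sdiff.1 hj).2 (mem_inter.1 hj').1
  have hcard : #(T \ S) + #(S ∩ D) ≤ #D := by
    rw [← card_union_of_disjoint hdisj]
    exact card_le_card (union_subset hsdiff inter_subset_right)
  have hTS : #T - #S ≤ #(T \ S) := le_card_sdiff S T
  have hempty : S ∩ D = ∅ := by
    change #D ≤ #T - #S at hd
    exact card_eq_zero.1 (by omega)
  by_contra hne
  have hiSD : i ∈ S ∩ D := by simp [S, D, hi, Ne.symm hne]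
  simp [hempty] at hiSD

end Words

def shortenAt {n q : ℕ} (C : Finset (Fin (n + 1) → Fin q)) (a : Fin q) :
    Finset (Fin n → Fin q) :=
  (C.filter fun c => c (Fin.last n) = a).image Fin.init

lemma mem_shortenAt {n q : ℕ} {C : Finset (Fin (n + 1) → Fin q)} {a : Fin q}
    {x : Fin n → Fin q} : x ∈ shortenAt C a ↔ Fin.snoc x a ∈ C := by
  constructor
  · intro hx
    obtain ⟨c, hc, rfl⟩ := mem_image.1 hx
    obtain ⟨hcC, rfl⟩ := mem_filter.1 hc
    rwa [Fin.snoc_init_self]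
  · intro hx
    exact mem_image.2 ⟨_, mem_filter.2 ⟨hx, Fin.snoc_last _ _⟩, Fin.init_snoc _ _⟩

lemma IsGS.shortenAt {t w n q : ℕ} {C : Finset (Fin (n + 1) → Fin q)} (hC : IsGS t w (n + 1) q C)
    (ht : 1 ≤ t) {a : Fin q} (ha : (a : ℕ) ≠ 0) : IsGS (t - 1) (w - 1) n q (shortenAt C a) := by
  obtain ⟨hCw, hCd, hCu⟩ := hC
  have wt_snoc_a (x : Fin n → Fin q) : wt (Fin.snoc x a : Fin (n + 1) → Fin q) = wt x + 1 := by
    rw [wt_snoc, if_neg ha]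
  refine ⟨fun c hc => ?_, fun c₁ h₁ c₂ h₂ hne => ?_, fun x hx => ?_⟩
  · have := hCw _ (mem_shortenAt.1 hc)
    rw [wt_snoc_a] at this
    omega
  · have := hCd _ (mem_shortenAt.1 h₁) _ (mem_shortenAt.1 h₂)
      (fun h => hne (by simpa using congrArg Fin.init h))
    rw [hammingDist_snoc_snoc] at this
    omega
  · have hxa : wt (Fin.snoc x a : Fin (n + 1) → Fin q) = t := by rw [wt_snoc_a]; omega
    obtain ⟨c, ⟨hcC, hcd⟩, huniq⟩ := hCu _ hxa
    have hclast : c (Fin.last n) = a := by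
      have := eq_on_support_of_hammingDist_le _ c (by rw [hcd, hxa, hCw c hcC]) (Fin.last n)
      simpa using this (by simpa using ha)
    rw [← Fin.snoc_init_self c, hclast] at hcC hcd huniq
    refine ⟨Fin.init c, ⟨mem_shortenAt.2 hcC, ?_⟩, fun c' ⟨hc', hc'd⟩ => ?_⟩
    · rw [hammingDist_snoc_snoc] at hcd
      omega
    · have := huniq (Fin.snoc c' a) ⟨mem_shortenAt.1 hc', by rw [hammingDist_snoc_snoc]; omega⟩
      simpa using congrArg Fin.init this

lemma isGS_empty_of_lt {t w n q : ℕ} (hn : n < t) : IsGS t w n q ∅ :=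
  ⟨by simp, by simp, fun x hx => absurd (wt_le x) (by omega)⟩

theorem gs_derived_general (t w n q : ℕ) (hq : 3 ≤ q) (ht : 2 ≤ t)
    (h : ∃ C : Finset (Fin n → Fin q), IsGS t w n q C) :
    ∃ C' : Finset (Fin (n - 1) → Fin q), IsGS (t - 1) (w - 1) (n - 1) q C' := by
  obtain ⟨C, hC⟩ := h
  cases n with
  | zero => exact ⟨∅, isGS_empty_of_lt (by omega)⟩
  | succ m => exact ⟨shortenAt C ⟨1, by omega⟩, hC.shortenAt (by omega) one_ne_zero⟩

/-- If a generalized Steiner system GS(t,w,n,q) exists with `t ≥ 2`, then a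
generalized Steiner system GS(t-1, w-1, n-1, q) exists. -/
theorem gs_derived (t w n q : ℕ) (hq : 3 ≤ q) (ht : 2 ≤ t) (htw : t ≤ w) (hw : w ≤ n)
    (h : ∃ C : Finset (Fin n → Fin q), IsGS t w n q C) :
    ∃ C' : Finset (Fin (n - 1) → Fin q), IsGS (t - 1) (w - 1) (n - 1) q C' :=
  gs_derived_general t w n q hq ht h
end

section
/- Let n, w be integers with 1 ≤ w ≤ n−1 and let q be an integer with q ≥ 1 + C(n−1, w−1). Then there exists a set C of words of length n and weight w over Fin q such that any two distinct members of C have Hamming distance at least w+1 and every w-element subset of Fin n is the support of exactly one codeword of C (so |C| = C(n,w)). -/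
/-- The support of a word `x : Fin n → Fin q`: the set of nonzero coordinates. -/
def supp {n q : ℕ} (x : Fin n → Fin q) : Finset (Fin n) :=
  Finset.univ.filter fun i => (x i : ℕ) ≠ 0

open Finset

theorem Finset.add_one_le_card_union {β : Type*} [DecidableEq β] {S T : Finset β} {w : ℕ}
    (hS : #S = w) (hT : #T = w) (hST : S ≠ T) : w + 1 ≤ #(S ∪ T) := by
  have hTS : ¬ T ⊆ S := fun h => hST (eq_of_subset_of_card_le h (by omega)).symm
  have hlt : #S < #(S ∪ T) := card_lt_card <| ssubset_iff_subset_ne.mpr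
    ⟨subset_union_left, fun h => hTS (h ▸ subset_union_right)⟩
  omega

section SupportCode

variable {ι α : Type*} [Fintype ι] [DecidableEq ι] [Zero α]

def supportCode (label : ι → Finset ι → α) (S : Finset ι) : ι → α :=
  fun i => if i ∈ S then label i S else 0

structure IsInjectiveLabelling (w : ℕ) (label : ι → Finset ι → α) : Prop where
  ne_zero : ∀ i S, i ∈ S → #S = w → label i S ≠ 0
  injOn : ∀ i, Set.InjOn (label i) {S | i ∈ S ∧ #S = w}

variable [DecidableEq α] {w : ℕ} {label : ι → Finset ι → α}

theorem IsInjectiveLabelling.filter_supportCode_ne_zero (hl : IsInjectiveLabelling w label)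
    {S : Finset ι} (hS : #S = w) : ({i | supportCode label S i ≠ 0} : Finset ι) = S := by
  ext i
  by_cases hi : i ∈ S
  · simp [supportCode, hi, hl.ne_zero i S hi hS]
  · simp [supportCode, hi]

theorem IsInjectiveLabelling.add_one_le_hammingDist (hl : IsInjectiveLabelling w label)
    {S T : Finset ι} (hS : #S = w) (hT : #T = w) (hST : S ≠ T) :
    w + 1 ≤ hammingDist (supportCode label S) (supportCode label T) := by
  have hdiff : S ∪ T ⊆ ({i | supportCode label S i ≠ supportCode label T i} : Finset ι) := by
    intro i hi
    rw [mem_filter_univ]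
    unfold supportCode
    by_cases hiS : i ∈ S <;> by_cases hiT : i ∈ T
    · simpa [hiS, hiT] using fun h => hST (hl.injOn i ⟨hiS, hS⟩ ⟨hiT, hT⟩ h)
    · simpa [hiS, hiT] using hl.ne_zero i S hiS hS
    · simpa [hiS, hiT, eq_comm] using hl.ne_zero i T hiT hT
    · exact absurd (mem_union.mp hi) (by simp [hiS, hiT])
  exact (add_one_le_card_union hS hT hST).trans (card_le_card hdiff)

end SupportCode

theorem exists_injOn_ne_zero {α β : Type*} [Fintype α] [Zero α]
    (s : Finset β) (hs : #s < Fintype.card α) :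
    ∃ f : β → α, Set.InjOn f s ∧ ∀ b ∈ s, f b ≠ 0 := by
  classical
  have hcard : Fintype.card s ≤ Fintype.card {a : α // a ≠ 0} := by
    rw [Fintype.card_coe, Fintype.card_subtype_compl, Fintype.card_subtype_eq]
    omega
  obtain ⟨g⟩ := Function.Embedding.nonempty_of_card_le hcard
  refine ⟨fun b => if h : b ∈ s then g ⟨b, h⟩ else 0, fun b hb c hc hbc => ?_,
    fun b hb => ?_⟩
  · simp only [mem_coe] at hb hc
    simp only [hb, hc, dite_true] at hbc
    exact congrArg Subtype.val (g.injective (Subtype.ext hbc))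
  · simpa [hb] using (g ⟨b, hb⟩).2

theorem exists_isInjectiveLabelling {ι α : Type*} [Fintype ι] [DecidableEq ι] [Fintype α]
    [Zero α] (w : ℕ) (h : (Fintype.card ι - 1).choose (w - 1) < Fintype.card α) :
    ∃ label : ι → Finset ι → α, IsInjectiveLabelling w label := by
  have hP : ∀ i : ι, #((univ.erase i).powersetCard (w - 1)) < Fintype.card α := fun i => by
    rwa [card_powersetCard, card_erase_of_mem (mem_univ i), card_univ]
  choose f hinj hne using fun i => exists_injOn_ne_zero (α := α) _ (hP i)
  have hmem : ∀ (i : ι) (S : Finset ι), i ∈ S → #S = w →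
      S.erase i ∈ (univ.erase i).powersetCard (w - 1) :=
    fun i S hi hS => mem_powersetCard.mpr
      ⟨erase_subset_erase i (subset_univ S), by rw [card_erase_of_mem hi, hS]⟩
  refine ⟨fun i (S : Finset ι) => f i (S.erase i),
    fun i S hi hS => hne i _ (hmem i S hi hS), ?_⟩
  rintro i S ⟨hiS, hS⟩ T ⟨hiT, hT⟩ hST
  exact erase_injOn' i hiS hiT (hinj i (hmem i S hiS hS) (hmem i T hiT hT) hST)

theorem supp_eq_filter_ne_zero {n q : ℕ} [NeZero q] (x : Fin n → Fin q) :
    supp x = ({i | x i ≠ 0} : Finset (Fin n)) := by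
  simp [supp]

theorem exists_code_d_eq_w_add_one_general (n w q : ℕ)
    (hq : 1 + Nat.choose (n - 1) (w - 1) ≤ q) :
    ∃ C : Finset (Fin n → Fin q),
      (∀ c ∈ C, wt c = w) ∧
      (∀ c₁ ∈ C, ∀ c₂ ∈ C, c₁ ≠ c₂ → w + 1 ≤ hammingDist c₁ c₂) ∧
      (∀ S : Finset (Fin n), S.card = w → ∃! c, c ∈ C ∧ supp c = S) ∧
      C.card = Nat.choose n w := by
  have : NeZero q := ⟨by omega⟩
  obtain ⟨label, hl⟩ := exists_isInjectiveLabelling (ι := Fin n) (α := Fin q) w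
    (by simp only [Fintype.card_fin]; omega)
  have hsupp : ∀ S : Finset (Fin n), #S = w → supp (supportCode label S) = S := fun S hS => by
    rw [supp_eq_filter_ne_zero, hl.filter_supportCode_ne_zero hS]
  have hinj : Set.InjOn (supportCode label) (univ.powersetCard w : Finset (Finset (Fin n))) := by
    intro S hS T hT hST
    rw [mem_coe, mem_powersetCard] at hS hT
    rw [← hsupp S hS.2, ← hsupp T hT.2, hST]
  refine ⟨(univ.powersetCard w).image (supportCode label), ?_, ?_, fun S hS => ?_, ?_⟩
  · simp only [mem_image, mem_powersetCard]
    rintro _ ⟨S, ⟨-, hS⟩, rfl⟩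
    rw [wt, ← supp, hsupp S hS, hS]
  · simp only [mem_image, mem_powersetCard]
    rintro _ ⟨S, ⟨-, hS⟩, rfl⟩ _ ⟨T, ⟨-, hT⟩, rfl⟩ hST
    exact hl.add_one_le_hammingDist hS hT (fun h => hST (h ▸ rfl))
  · refine ⟨supportCode label S, ⟨mem_image_of_mem _ (by simpa using hS), hsupp S hS⟩, ?_⟩
    simp only [mem_image, mem_powersetCard, and_imp]
    rintro _ ⟨T, ⟨-, hT⟩, rfl⟩ hTS
    rw [← hTS, hsupp T hT]
  · rw [card_image_of_injOn hinj, card_powersetCard, card_univ, Fintype.card_fin]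

/-- For every alphabet of size `q ≥ 1 + C(n-1, w-1)` there is an `(n, w+1, w)_q`
code: a set of words of length `n` and weight `w` over `Fin q` with minimum
Hamming distance `w + 1` in which every `w`-element subset of `Fin n` is the
support of exactly one codeword; consequently it has `C(n,w)` codewords. -/
theorem exists_code_d_eq_w_add_one (n w q : ℕ) (hw1 : 1 ≤ w) (hw : w ≤ n - 1)
    (hq : 1 + Nat.choose (n - 1) (w - 1) ≤ q) :
    ∃ C : Finset (Fin n → Fin q),
      (∀ c ∈ C, wt c = w) ∧
      (∀ c₁ ∈ C, ∀ c₂ ∈ C, c₁ ≠ c₂ → w + 1 ≤ hammingDist c₁ c₂) ∧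
      (∀ S : Finset (Fin n), S.card = w → ∃! c, c ∈ C ∧ supp c = S) ∧
      C.card = Nat.choose n w :=
  exists_code_d_eq_w_add_one_general n w q hq
end

section
/- Let n ≥ 5 be odd. Then there exists a set C of words of length n and weight 3 over Fin (n−1) such that any two distinct members of C have Hamming distance at least 4 and every 3-element subset of Fin n is the support of exactly one codeword of C; moreover, no such set of words exists over Fin q for any q ≤ n−2. (That is, q₀(3,n) = n−1 for odd n.) -/
/-- `C` is an `(n, w+1, w)_q` code with minimum Hamming distance `w + 1` in which
every `w`-element subset of `Fin n` is the support of exactly one codeword. -/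
def IsPerfectSupportCode (n w q : ℕ) (C : Finset (Fin n → Fin q)) : Prop :=
  (∀ c ∈ C, wt c = w) ∧
  (∀ c₁ ∈ C, ∀ c₂ ∈ C, c₁ ≠ c₂ → w + 1 ≤ hammingDist c₁ c₂) ∧
  (∀ S : Finset (Fin n), S.card = w → ∃! c, c ∈ C ∧ supp c = S)

/-!
Restricted to a coordinate `a`, the codewords supported on the triples through `a` colour the
edges `{b, c}` of the complete graph on the other `n - 1` coordinates with the `q - 1` nonzero
symbols, and distance `w + 1 = 4` makes this colouring proper: the codewords on `{a, b, c}` and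
`{a, b, d}` agree outside these four coordinates, so they must differ at `a`. A vertex has degree
`n - 2`, hence `q ≥ n - 1` (for weight `w` the same argument with `w - 1` fixed coordinates gives
`q ≥ n - w + 2`).

Conversely, for odd `n` the complete graph on `n - 1` vertices has a 1-factorisation with `n - 2`
colours, and writing at every coordinate `i` of a triple `S` the colour, shifted to be nonzero, of
the edge `S \ {i}` in such a colouring of the complete graph on the coordinates other than `i`
gives a code as required: two triples sharing `{a, b}` give words differing at `a` and at `b` by
properness.
-/

open Finset

section Words

variable {n q : ℕ}

theorem mem_supp {x : Fin n → Fin q} {i : Fin n} : i ∈ supp x ↔ (x i : ℕ) ≠ 0 := by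
  simp [supp]

theorem apply_ne_of_mem_supp_of_notMem_supp {x y : Fin n → Fin q} {i : Fin n}
    (hx : i ∈ supp x) (hy : i ∉ supp y) : x i ≠ y i := by
  rw [mem_supp] at hx hy
  exact fun h => hx (h ▸ not_not.mp hy)

theorem filter_apply_ne_subset_supp_union (x y : Fin n → Fin q) :
    univ.filter (fun i => x i ≠ y i) ⊆ supp x ∪ supp y := by
  intro i hi
  by_contra hxy
  simp only [mem_union, not_or, mem_supp, not_not] at hxy
  exact (mem_filter.mp hi).2 (Fin.ext (hxy.1.trans hxy.2.symm))

theorem apply_ne_of_card_supp_union_le {x y : Fin n → Fin q}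
    (h : (supp x ∪ supp y).card ≤ hammingDist x y) {i : Fin n} (hi : i ∈ supp x ∪ supp y) :
    x i ≠ y i := by
  rw [← eq_of_subset_of_card_le (filter_apply_ne_subset_supp_union x y) h] at hi
  exact (mem_filter.mp hi).2

end Words

section LowerBound

variable {n w q : ℕ} {C : Finset (Fin n → Fin q)}

theorem IsPerfectSupportCode.apply_ne (hC : IsPerfectSupportCode n w q C)
    {x y : Fin n → Fin q} (hx : x ∈ C) (hy : y ∈ C) (hxy : x ≠ y)
    (hcard : (supp x ∪ supp y).card ≤ w + 1) {i : Fin n} (hi : i ∈ supp x ∪ supp y) :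
    x i ≠ y i :=
  apply_ne_of_card_supp_union_le (hcard.trans (hC.2.1 x hx y hy hxy)) hi

theorem IsPerfectSupportCode.add_two_le_add (hC : IsPerfectSupportCode n w q C)
    (hw : 2 ≤ w) (hwn : w ≤ n) : n + 2 ≤ q + w := by
  obtain ⟨A, -, hA⟩ := exists_subset_card_eq (s := (univ : Finset (Fin n))) (n := w - 1)
    (by rw [card_univ, Fintype.card_fin]; omega)
  obtain ⟨a, ha⟩ : A.Nonempty := card_pos.mp (by omega)
  have hcard : ∀ c ∉ A, (insert c A).card = w := fun c hc => by
    rw [card_insert_of_notMem hc]; omega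
  obtain ⟨c₀, hc₀⟩ : Aᶜ.Nonempty := card_pos.mp (by rw [card_compl, Fintype.card_fin]; omega)
  have : Nonempty (Fin n → Fin q) := ⟨(hC.2.2 _ (hcard c₀ (mem_compl.mp hc₀))).exists.choose⟩
  choose! x hxC hsupp using fun c (hc : c ∉ A) => (hC.2.2 _ (hcard c hc)).exists
  have hpos : ∀ c ∉ A, (x c a : ℕ) ≠ 0 := fun c hc =>
    mem_supp.mp (by rw [hsupp c hc]; exact mem_insert_of_mem ha)
  have hne : ∀ c ∉ A, ∀ d ∉ A, c ≠ d → x c a ≠ x d a := by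
    intro c hc d hd hcd
    have hunion : supp (x c) ∪ supp (x d) = insert c (insert d A) := by
      rw [hsupp c hc, hsupp d hd]; ext; simp [or_left_comm]
    have hxcd : x c ≠ x d := fun h => by
      simpa [hsupp c hc, hsupp d hd, hc, hcd] using congrArg (c ∈ supp ·) h
    refine hC.apply_ne (hxC c hc) (hxC d hd) hxcd ?_ (by rw [hunion]; simp [ha])
    rw [hunion, card_insert_of_notMem (by simp [hcd, hc]), hcard d hd]
  have hmaps : Set.MapsTo (fun c => (x c a : ℕ) - 1) (Aᶜ : Finset (Fin n)) (range (q - 1)) := by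
    intro c hc
    simp only [coe_compl, Set.mem_compl_iff, mem_coe, coe_range, Set.mem_Iio] at hc ⊢
    have := (x c a).isLt
    have := hpos c hc
    omega
  have hinj : Set.InjOn (fun c => (x c a : ℕ) - 1) (Aᶜ : Finset (Fin n)) := by
    intro c hc d hd hcd
    simp only [coe_compl, Set.mem_compl_iff, mem_coe] at hc hd hcd
    by_contra h
    exact hne c hc d hd h (Fin.ext (by have := hpos c hc; have := hpos d hd; omega))
  have := card_le_card_of_injOn _ hmaps hinj
  rw [card_compl, hA, card_range, Fintype.card_fin] at this
  omega

end LowerBound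

theorem Finset.exists_eq_pair_of_mem {α : Type*} [DecidableEq α] {s : Finset α} {a : α}
    (hs : s.card = 2) (ha : a ∈ s) : ∃ b, a ≠ b ∧ s = {a, b} := by
  obtain ⟨b, hb⟩ := card_eq_one.mp (by rw [card_erase_of_mem ha, hs] : (s.erase a).card = 1)
  have hbs : b ∈ s.erase a := hb ▸ mem_singleton_self b
  exact ⟨b, fun hab => (mem_erase.mp hbs).1 hab.symm, by rw [← insert_erase ha, hb]⟩

section LinkCode

variable {n k : ℕ}

/-- `col i` is a proper edge colouring of the complete graph on `Fin n \ {i}`, whose edges are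
given as 2-sets. -/
def IsProperLinkColoring {α : Type*} (col : Fin n → Finset (Fin n) → α) : Prop :=
  ∀ ⦃i b c d : Fin n⦄, b ≠ i → c ≠ i → d ≠ i → b ≠ c → b ≠ d → c ≠ d →
    col i {b, c} ≠ col i {b, d}

theorem IsProperLinkColoring.comp {α β : Type*} {col : Fin n → Finset (Fin n) → α}
    (hcol : IsProperLinkColoring col) {f : α → β} (hf : Function.Injective f) :
    IsProperLinkColoring fun i T => f (col i T) :=
  fun _ _ _ _ hbi hci hdi hbc hbd hcd => hf.ne (hcol hbi hci hdi hbc hbd hcd)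

def linkWord (col : Fin n → Finset (Fin n) → Fin k) (S : Finset (Fin n)) : Fin n → Fin (k + 1) :=
  fun i => if i ∈ S then (col i (S.erase i)).succ else 0

def linkCode (col : Fin n → Finset (Fin n) → Fin k) : Finset (Fin n → Fin (k + 1)) :=
  (univ.powersetCard 3).image (linkWord col)

variable {col : Fin n → Finset (Fin n) → Fin k}

@[simp]
theorem supp_linkWord (S : Finset (Fin n)) : supp (linkWord col S) = S := by
  ext i
  by_cases hi : i ∈ S <;> simp [linkWord, mem_supp, hi]

theorem linkWord_apply_ne_of_card_inter_eq_two (hcol : IsProperLinkColoring col)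
    {S T : Finset (Fin n)} (hS : S.card = 3) (hT : T.card = 3) (hST : S ≠ T)
    (hI : (S ∩ T).card = 2) {i : Fin n} (hi : i ∈ S ∩ T) :
    linkWord col S i ≠ linkWord col T i := by
  obtain ⟨hiS, hiT⟩ := mem_inter.mp hi
  obtain ⟨b, hib, hb⟩ := exists_eq_pair_of_mem hI hi
  have hbI : b ∈ S ∩ T := by rw [hb]; exact mem_insert_of_mem (mem_singleton_self b)
  obtain ⟨c, hbc, hc⟩ := exists_eq_pair_of_mem (s := S.erase i)
    (by rw [card_erase_of_mem hiS, hS]) (mem_erase.mpr ⟨hib.symm, (mem_inter.mp hbI).1⟩)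
  obtain ⟨d, hbd, hd⟩ := exists_eq_pair_of_mem (s := T.erase i)
    (by rw [card_erase_of_mem hiT, hT]) (mem_erase.mpr ⟨hib.symm, (mem_inter.mp hbI).2⟩)
  have hci : c ≠ i := (mem_erase.mp (hc ▸ mem_insert_of_mem (mem_singleton_self c))).1
  have hdi : d ≠ i := (mem_erase.mp (hd ▸ mem_insert_of_mem (mem_singleton_self d))).1
  have hcd : c ≠ d := fun h => hST (by rw [← insert_erase hiS, ← insert_erase hiT, hc, hd, h])
  simp only [linkWord, if_pos hiS, if_pos hiT, hc, hd, ne_eq, Fin.succ_inj]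
  exact hcol hib.symm hci hdi hbc hbd hcd

theorem four_le_hammingDist_linkWord (hcol : IsProperLinkColoring col)
    {S T : Finset (Fin n)} (hS : S.card = 3) (hT : T.card = 3) (hST : S ≠ T) :
    4 ≤ hammingDist (linkWord col S) (linkWord col T) := by
  set D := univ.filter fun i => linkWord col S i ≠ linkWord col T i
  have hdist : hammingDist (linkWord col S) (linkWord col T) = D.card := rfl
  have hsymm : (S ∪ T) \ (S ∩ T) ⊆ D := by
    intro i hi
    simp only [mem_sdiff, mem_union, mem_inter, not_and] at hi
    refine mem_filter.mpr ⟨mem_univ i, ?_⟩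
    rcases hi with ⟨hiS | hiT, h⟩
    · exact apply_ne_of_mem_supp_of_notMem_supp (by simpa) (by simpa using h hiS)
    · exact (apply_ne_of_mem_supp_of_notMem_supp (by simpa)
        (by simpa using fun h' => h h' hiT)).symm
  have hunion := card_union_add_card_inter S T
  have hI : (S ∩ T).card ≤ 2 := by
    by_contra! h
    exact hST ((eq_of_subset_of_card_le inter_subset_left (by omega)).symm.trans
      (eq_of_subset_of_card_le inter_subset_right (by omega)))
  rw [hdist]
  rcases hI.lt_or_eq with hI | hI
  · have := card_le_card hsymm
    rw [card_sdiff_of_subset inter_subset_union] at this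
    omega
  · have hinter : S ∩ T ⊆ D := fun i hi =>
      mem_filter.mpr ⟨mem_univ i, linkWord_apply_ne_of_card_inter_eq_two hcol hS hT hST hI hi⟩
    have hsub : S ∪ T ⊆ D := fun i hi =>
      if h : i ∈ S ∩ T then hinter h else hsymm (mem_sdiff.mpr ⟨hi, h⟩)
    have := card_le_card hsub
    omega

theorem isPerfectSupportCode_linkCode (hcol : IsProperLinkColoring col) :
    IsPerfectSupportCode n 3 (k + 1) (linkCode col) := by
  simp only [IsPerfectSupportCode, linkCode, forall_mem_image, mem_powersetCard, subset_univ,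
    true_and]
  refine ⟨fun S hS => by rw [wt, ← supp, supp_linkWord, hS],
    fun S hS T hT hST => four_le_hammingDist_linkWord hcol hS hT fun h => hST (h ▸ rfl),
    fun S hS => ⟨linkWord col S, ?_, ?_⟩⟩
  · exact ⟨mem_image_of_mem _ (mem_powersetCard.mpr ⟨subset_univ S, hS⟩), supp_linkWord S⟩
  · rintro _ ⟨hx, rfl⟩
    obtain ⟨T, -, rfl⟩ := mem_image.mp hx
    rw [supp_linkWord]

end LinkCode

section OneFactorization

variable {m x y z : ℕ}

/-- The 1-factorisation of the complete graph on `ℤ/m ∪ {∞}`, `m` odd: the edge `{x, y}` gets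
colour `x + y` and `{x, ∞}` gets `2 x`. Here `∞` is `m`, which is `0` in `ZMod m`. -/
def pairColor (m x y : ℕ) : ZMod m := (if x = m ∨ y = m then 2 else 1) * (x + y)

theorem pairColor_ne (hm : Odd m) (hx : x ≤ m) (hy : y ≤ m) (hz : z ≤ m)
    (hxy : x ≠ y) (hxz : x ≠ z) (hyz : y ≠ z) : pairColor m x y ≠ pairColor m x z := by
  have cast_inj : ∀ {a b : ℕ}, a < m → b < m → (a : ZMod m) = b → a = b := fun ha hb h => by
    rw [← ZMod.val_cast_of_lt ha, ← ZMod.val_cast_of_lt hb, h]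
  have two : IsUnit (2 : ZMod m) := by
    exact_mod_cast (ZMod.isUnit_iff_coprime 2 m).mpr (Nat.coprime_two_left.mpr hm)
  intro h
  simp only [pairColor] at h
  rcases hx.lt_or_eq with hx | rfl
  · rcases hy.lt_or_eq with hy | rfl <;> rcases hz.lt_or_eq with hz | rfl
    · simp only [hx.ne, hy.ne, hz.ne, or_self, if_false, one_mul, add_right_inj] at h
      exact hyz (cast_inj hy hz h)
    · simp only [hx.ne, hy.ne, or_self, or_true, if_true, if_false, one_mul, ZMod.natCast_self,
        add_zero, two_mul, add_right_inj] at h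
      exact hxy (cast_inj hx hy h.symm)
    · simp only [hx.ne, hz.ne, or_self, or_true, if_true, if_false, one_mul, ZMod.natCast_self,
        add_zero, two_mul, add_right_inj] at h
      exact hxz (cast_inj hx hz h)
    · exact hyz rfl
  · simp only [true_or, if_true, ZMod.natCast_self, zero_add] at h
    exact hyz (cast_inj (lt_of_le_of_ne hy hxy.symm) (lt_of_le_of_ne hz hxz.symm)
      (two.mul_left_cancel h))

def linkLabel (i j : Fin (m + 2)) : ℕ := if (j : ℕ) < i then j else j - 1

theorem linkLabel_le {i j : Fin (m + 2)} (h : j ≠ i) : linkLabel i j ≤ m := by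
  have := j.isLt
  have := Fin.val_ne_of_ne h
  unfold linkLabel
  split_ifs <;> omega

theorem linkLabel_inj {i j j' : Fin (m + 2)} (h : j ≠ i) (h' : j' ≠ i) :
    linkLabel i j = linkLabel i j' ↔ j = j' := by
  have := Fin.val_ne_of_ne h
  have := Fin.val_ne_of_ne h'
  rw [Fin.ext_iff]
  unfold linkLabel
  split_ifs <;> omega

/-- `pairColor` read off a 2-set: the vertex labelled `m` adds `0` to the sum and doubles it. -/
def linkColor (m : ℕ) (i : Fin (m + 2)) (T : Finset (Fin (m + 2))) : ZMod m :=
  (if ∃ j ∈ T, linkLabel i j = m then 2 else 1) * ∑ j ∈ T, (linkLabel i j : ZMod m)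

theorem linkColor_pair {i b c : Fin (m + 2)} (hbc : b ≠ c) :
    linkColor m i {b, c} = pairColor m (linkLabel i b) (linkLabel i c) := by
  simp [linkColor, pairColor, sum_pair hbc]

theorem isProperLinkColoring_linkColor (hm : Odd m) : IsProperLinkColoring (linkColor m) := by
  intro i b c d hbi hci hdi hbc hbd hcd
  rw [linkColor_pair hbc, linkColor_pair hbd]
  exact pairColor_ne hm (linkLabel_le hbi) (linkLabel_le hci) (linkLabel_le hdi)
    ((linkLabel_inj hbi hci).not.mpr hbc) ((linkLabel_inj hbi hdi).not.mpr hbd)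
    ((linkLabel_inj hci hdi).not.mpr hcd)

theorem exists_isPerfectSupportCode_three (hm : Odd m) :
    ∃ C : Finset (Fin (m + 2) → Fin (m + 1)), IsPerfectSupportCode (m + 2) 3 (m + 1) C := by
  have : NeZero m := ⟨hm.pos.ne'⟩
  exact ⟨_, isPerfectSupportCode_linkCode
    ((isProperLinkColoring_linkColor hm).comp (ZMod.finEquiv m).symm.injective)⟩

end OneFactorization

/-- For odd `n ≥ 5`, the smallest alphabet size admitting an `(n,4,3)_q` code
with a codeword on every `3`-subset is `q₀(3,n) = n - 1`. -/
theorem q0_three_odd (n : ℕ) (hn : 5 ≤ n) (hodd : Odd n) :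
    (∃ C : Finset (Fin n → Fin (n - 1)), IsPerfectSupportCode n 3 (n - 1) C) ∧
    (∀ q : ℕ, q ≤ n - 2 → ¬ ∃ C : Finset (Fin n → Fin q), IsPerfectSupportCode n 3 q C) := by
  refine ⟨?_, fun q hq ⟨C, hC⟩ => ?_⟩
  · obtain ⟨m, rfl⟩ : ∃ m, n = m + 2 := ⟨n - 2, by omega⟩
    exact exists_isPerfectSupportCode_three (by simpa [parity_simps] using hodd)
  · have := hC.add_two_le_add (by norm_num) (by omega)
    omega
end
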